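/- Let E = {e^{g+iθ} + e^{−g−iθ} : θ ∈ [0,2π]} ⊆ ℂ with g > 0 and let μ ≥ e^g + e^{−g}. Then the set E + [−μ, μ] (Minkowski sum with the real interval) is convex and equals Conv(E) + [−μ, μ]. -/

import Mathlib

open scoped Pointwise

noncomputable section

set_option maxHeartbeats 1000000

/-- The ellipse `E = {e^{g+iθ} + e^{-g-iθ} : θ ∈ [0, 2π]}`. -/
def ellipseSpec (g : ℝ) : Set ℂ :=
  {z : ℂ | ∃ θ ∈ Set.Icc (0 : ℝ) (2 * Real.pi),
    z = Complex.exp ((g : ℂ) + θ * Complex.I) + Complex.exp (-(g : ℂ) - θ * Complex.I)}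

private lemma ellipse_pt (g θ : ℝ) :
    Complex.exp ((g:ℂ) + θ*Complex.I) + Complex.exp (-(g:ℂ) - θ*Complex.I)
    = (((Real.exp g + Real.exp (-g)) * Real.cos θ : ℝ) : ℂ)
      + ((Real.exp g - Real.exp (-g)) * Real.sin θ : ℝ)*Complex.I := by
  rw [show (g:ℂ) + θ*Complex.I = (g:ℝ) + (θ:ℝ)*Complex.I by norm_num,
      show -(g:ℂ) - θ*Complex.I = ((-g:ℝ):ℂ) + ((-θ:ℝ):ℂ)*Complex.I by push_cast; ring,
      Complex.exp_add, Complex.exp_add, Complex.exp_mul_I, Complex.exp_mul_I,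
      ← Complex.ofReal_exp, ← Complex.ofReal_exp, ← Complex.ofReal_cos, ← Complex.ofReal_cos,
      ← Complex.ofReal_sin, ← Complex.ofReal_sin]
  push_cast [Real.cos_neg, Real.sin_neg]
  ring

private lemma exists_theta (y : ℝ) (hy1 : -1 ≤ y) (hy2 : y ≤ 1) (ε : ℝ) (hε : ε = 1 ∨ ε = -1) :
    ∃ θ ∈ Set.Icc (0:ℝ) (2*Real.pi),
      Real.cos θ = ε * Real.sqrt (1 - y^2) ∧ Real.sin θ = y := by
  have hpi := Real.pi_pos
  have h1 := Real.arcsin_le_pi_div_two y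
  have h2 := Real.neg_pi_div_two_le_arcsin y
  rcases hε with rfl | rfl
  · rcases le_or_gt 0 y with hy | hy
    · exact ⟨Real.arcsin y, ⟨Real.arcsin_nonneg.2 hy, by linarith⟩,
        by rw [Real.cos_arcsin, one_mul], Real.sin_arcsin hy1 hy2⟩
    · refine ⟨Real.arcsin y + 2*Real.pi, ⟨by linarith, ?_⟩,
        by rw [Real.cos_add_two_pi, Real.cos_arcsin, one_mul],
        by rw [Real.sin_add_two_pi, Real.sin_arcsin hy1 hy2]⟩
      have : Real.arcsin y ≤ 0 := Real.arcsin_nonpos.2 hy.le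
      linarith
  · exact ⟨Real.pi - Real.arcsin y, ⟨by linarith, by linarith⟩,
      by rw [Real.cos_pi_sub, Real.cos_arcsin]; ring,
      by rw [Real.sin_pi_sub, Real.sin_arcsin hy1 hy2]⟩

private def Tmap (a b : ℝ) : ℂ →ₗ[ℝ] ℂ where
  toFun z := ⟨z.re / a, z.im / b⟩
  map_add' := by intros; simp [Complex.ext_iff, add_div]
  map_smul' := by intros; simp [Complex.ext_iff, mul_div_assoc]

theorem ellipse_add_interval_convex_eq_convexHull_add
    (g μ : ℝ) (hg : 0 < g) (hμ : Real.exp g + Real.exp (-g) ≤ μ) :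
    Convex ℝ (ellipseSpec g + (fun t : ℝ => (t : ℂ)) '' Set.Icc (-μ) μ) ∧
    ellipseSpec g + (fun t : ℝ => (t : ℂ)) '' Set.Icc (-μ) μ =
      closure (convexHull ℝ (ellipseSpec g)) + (fun t : ℝ => (t : ℂ)) '' Set.Icc (-μ) μ := by
  set a := Real.exp g + Real.exp (-g) with ha_def
  set b := Real.exp g - Real.exp (-g) with hb_def
  have ha : 0 < a := by positivity
  have hb : 0 < b := by
    have : Real.exp (-g) < Real.exp g := Real.exp_lt_exp.2 (by linarith)
    simpa [hb_def] using sub_pos.2 this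
  -- the filled ellipse as preimage of closed ball
  set F : Set ℂ := (Tmap a b) ⁻¹' Metric.closedBall 0 1 with hF_def
  have hmemF : ∀ z : ℂ, z ∈ F ↔ (z.re / a)^2 + (z.im / b)^2 ≤ 1 := by
    intro z
    rw [hF_def, Set.mem_preimage, mem_closedBall_zero_iff,
      ← pow_le_one_iff_of_nonneg (norm_nonneg _) two_ne_zero,
      Complex.sq_norm, Complex.normSq_apply]
    show (z.re / a) * (z.re / a) + (z.im / b) * (z.im / b) ≤ 1 ↔ _
    constructor <;> intro h <;> nlinarith [h]
  have hFconv : Convex ℝ F := (convex_closedBall (0:ℂ) 1).linear_preimage (Tmap a b)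
  have hFclosed : IsClosed F :=
    Metric.isClosed_closedBall.preimage (Tmap a b).continuous_of_finiteDimensional
  have hEF : ellipseSpec g ⊆ F := by
    rintro z ⟨θ, hθ, rfl⟩
    rw [hmemF, ellipse_pt]
    simp only [Complex.add_re, Complex.add_im, Complex.ofReal_re, Complex.ofReal_im,
      Complex.mul_re, Complex.mul_im, Complex.I_re, Complex.I_im, mul_zero, mul_one,
      zero_mul, sub_zero, zero_add, add_zero]
    rw [mul_div_cancel_left₀ _ ha.ne', mul_div_cancel_left₀ _ hb.ne']
    nlinarith [Real.sin_sq_add_cos_sq θ]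
  have hkey : closure (convexHull ℝ (ellipseSpec g)) ⊆ F :=
    closure_minimal (convexHull_min hEF hFconv) hFclosed
  have heq : ellipseSpec g + (fun t : ℝ => (t : ℂ)) '' Set.Icc (-μ) μ =
      closure (convexHull ℝ (ellipseSpec g)) + (fun t : ℝ => (t : ℂ)) '' Set.Icc (-μ) μ := by
    apply Set.Subset.antisymm
    · exact Set.add_subset_add_right ((subset_convexHull ℝ _).trans subset_closure)
    · rintro z hz
      rw [Set.mem_add] at hz
      obtain ⟨w, hw, v, ⟨t, ht, rfl⟩, rfl⟩ := hz
      have hwF := hkey hw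
      rw [hmemF] at hwF
      set y := w.im / b with hy_def
      have hy2 : y^2 ≤ 1 := by nlinarith [sq_nonneg (w.re / a)]
      have hy : |y| ≤ 1 := by rwa [← sq_le_one_iff_abs_le_one]
      set c := Real.sqrt (1 - y^2) with hc_def
      have hc2 : c^2 = 1 - y^2 := Real.sq_sqrt (by linarith)
      have hc0 : 0 ≤ c := Real.sqrt_nonneg _
      have hc1 : c ≤ 1 := by nlinarith
      have hwre : |w.re| ≤ a * c := by
        have h1 : (w.re / a)^2 ≤ c^2 := by rw [hc2]; nlinarith
        have h2 : |w.re / a| ≤ c := by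
          nlinarith [sq_abs (w.re / a), abs_nonneg (w.re / a)]
        rw [abs_div, abs_of_pos ha, div_le_iff₀ ha] at h2
        linarith
      set ε : ℝ := if 0 ≤ w.re + t then 1 else -1 with hε_def
      obtain ⟨θ, hθ, hcos, hsin⟩ := exists_theta y (abs_le.1 hy).1 (abs_le.1 hy).2 ε
        (by rw [hε_def]; split <;> simp)
      set s := w.re + t - a * (ε * c) with hs_def
      have hwim : b * y = w.im := by rw [hy_def]; field_simp [hb.ne']
      have hac : a * c ≤ μ := by nlinarith
      have hac0 : 0 ≤ a * c := by positivity
      obtain ⟨hr1, hr2⟩ := abs_le.1 hwre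
      obtain ⟨ht1, ht2⟩ := ht
      have hsmem : s ∈ Set.Icc (-μ) μ := by
        by_cases h : 0 ≤ w.re + t
        · have hε1 : ε = 1 := if_pos h
          constructor <;> rw [hs_def, hε1] <;> nlinarith
        · have hε1 : ε = -1 := if_neg h
          push_neg at h
          constructor <;> rw [hs_def, hε1] <;> nlinarith
      refine Set.mem_add.2 ⟨_, ⟨θ, hθ, rfl⟩, (s:ℂ), ⟨s, hsmem, rfl⟩, ?_⟩
      rw [ellipse_pt]
      rw [← hc_def] at hcos
      apply Complex.ext
      · simp only [Complex.add_re, Complex.ofReal_re, Complex.mul_re, Complex.ofReal_im,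
          Complex.I_re, Complex.I_im, ← ha_def, ← hb_def, hcos, hsin]
        rw [hs_def]; ring
      · simp only [Complex.add_im, Complex.ofReal_im, Complex.mul_im, Complex.ofReal_re,
          Complex.I_re, Complex.I_im, ← hb_def, hsin]
        rw [hwim]; ring
  exact ⟨heq ▸ (((convex_convexHull ℝ _).closure).add
    ((convex_Icc (-μ) μ).linear_image Complex.ofRealCLM.toLinearMap)), heq⟩
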